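/- arXiv:2501.00505 — 5 statements merged into one kernel-verified Lean document; each statement's English description precedes it below -/
import Mathlib

section
/- Let J₁, J₂, J₃ be complex-linear endomorphisms of a complex vector space W satisfying the quaternion relations, and for ζ ∈ ℂ set J(ζ) = c₁(ζ)J₁ + c₂(ζ)J₂ + c₃(ζ)J₃ where c(ζ) is the stereographic unit vector. Then for every v ∈ W with J₃ v = −i v, one has J(ζ)(1 + ζJ₁)v = −i (1 + ζJ₁)v; i.e. (1+ζJ₁) maps the (−i)-eigenspace of J₃ into the (−i)-eigenspace of J(ζ). -/
/-!
Put `w = J₁ v`. The quaternion relations turn `J₃ v = -i v` into `J₁ w = -v`, `J₂ v = i w`,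
`J₂ w = i v` and `J₃ w = i w`, so `J(ζ)` preserves the plane spanned by `v` and `w`. On that
plane the eigenvalue equation for `v + ζ w` reduces to the two scalar identities
`c₁ + i c₂ + i ζ c₃ = -i ζ` and `-i c₃ - ζ (c₁ - i c₂) = -i`, which hold because
`(1 + |ζ|²)(c₁ + i c₂) = -2iζ` and `(1 + |ζ|²)(c₁ - i c₂) = 2i ζ̄`.
-/

open Complex

section QuaternionEigen

variable {W : Type*} [AddCommGroup W] [Module ℂ W] {J₁ J₂ J₃ : Module.End ℂ W} {v : W} {μ : ℂ}

theorem apply_apply_eq_neg_of_mul_self_eq_neg_one (h : J₁ * J₁ = -1) (v : W) :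
    J₁ (J₁ v) = -v := by
  simpa using LinearMap.congr_fun h v

theorem apply_eq_neg_smul_of_mul_eq_neg (h13 : J₁ * J₃ = -J₂) (hv : J₃ v = μ • v) :
    J₂ v = -μ • J₁ v := by
  have h := LinearMap.congr_fun h13 v
  simp only [Module.End.mul_apply, hv, map_smul, LinearMap.neg_apply] at h
  rw [neg_smul, h, neg_neg]

theorem apply_apply_eq_neg_smul_of_mul_eq (h31 : J₃ * J₁ = J₂) (h13 : J₁ * J₃ = -J₂)
    (hv : J₃ v = μ • v) : J₃ (J₁ v) = -μ • J₁ v := by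
  rw [← apply_eq_neg_smul_of_mul_eq_neg h13 hv]
  exact LinearMap.congr_fun h31 v

theorem apply_apply_eq_neg_smul_of_mul_eq_neg (h21 : J₂ * J₁ = -J₃) (hv : J₃ v = μ • v) :
    J₂ (J₁ v) = -μ • v := by
  simpa [hv] using LinearMap.congr_fun h21 v

end QuaternionEigen

section Stereographic

variable {ζ : ℂ} {c₁ c₂ c₃ : ℝ}

theorem stereo_coeff_of_v
    (hc₁ : c₁ = (1 + ‖ζ‖ ^ 2)⁻¹ * (2 * ζ.im))
    (hc₂ : c₂ = (1 + ‖ζ‖ ^ 2)⁻¹ * (-2 * ζ.re))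
    (hc₃ : c₃ = (1 + ‖ζ‖ ^ 2)⁻¹ * (1 - ‖ζ‖ ^ 2)) :
    (c₃ : ℂ) * -I + ζ * (-c₁ + c₂ * I) = -I := by
  obtain ⟨x, y, rfl⟩ : ∃ x y : ℝ, ζ = x + y * I := ⟨_, _, (re_add_im ζ).symm⟩
  have hd : (1 + (‖(x : ℂ) + y * I‖ : ℂ) ^ 2) ≠ 0 := by
    exact_mod_cast (by positivity : (1 + ‖(x : ℂ) + y * I‖ ^ 2 : ℝ) ≠ 0)
  subst hc₁ hc₂ hc₃
  push_cast
  field_simp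
  rw [← ofReal_pow, Complex.sq_norm, normSq_add_mul_I]
  simp only [add_re, ofReal_re, mul_re, I_re, mul_zero, ofReal_im, I_im, mul_one, sub_self,
    add_zero, add_im, mul_im, zero_add]
  push_cast
  linear_combination (-2 * x * y : ℂ) * I_sq

theorem stereo_coeff_of_J₁v
    (hc₁ : c₁ = (1 + ‖ζ‖ ^ 2)⁻¹ * (2 * ζ.im))
    (hc₂ : c₂ = (1 + ‖ζ‖ ^ 2)⁻¹ * (-2 * ζ.re))
    (hc₃ : c₃ = (1 + ‖ζ‖ ^ 2)⁻¹ * (1 - ‖ζ‖ ^ 2)) :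
    (c₁ : ℂ) + c₂ * I + ζ * (c₃ * I) = -(I * ζ) := by
  obtain ⟨x, y, rfl⟩ : ∃ x y : ℝ, ζ = x + y * I := ⟨_, _, (re_add_im ζ).symm⟩
  have hd : (1 + (‖(x : ℂ) + y * I‖ : ℂ) ^ 2) ≠ 0 := by
    exact_mod_cast (by positivity : (1 + ‖(x : ℂ) + y * I‖ ^ 2 : ℝ) ≠ 0)
  subst hc₁ hc₂ hc₃
  push_cast
  field_simp
  rw [← ofReal_pow, Complex.sq_norm, normSq_add_mul_I]
  simp only [add_re, ofReal_re, mul_re, I_re, mul_zero, ofReal_im, I_im, mul_one, sub_self,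
    add_zero, add_im, mul_im, zero_add]
  push_cast
  linear_combination (2 * y : ℂ) * I_sq

end Stereographic

theorem stmt_4_general (W : Type*) [AddCommGroup W] [Module ℂ W]
    (J₁ J₂ J₃ : Module.End ℂ W)
    (h1 : J₁ * J₁ = -1)
    (h21 : J₂ * J₁ = -J₃)
    (h31 : J₃ * J₁ = J₂) (h13 : J₁ * J₃ = -J₂)
    (ζ : ℂ) (c₁ c₂ c₃ : ℝ)
    (hc₁ : c₁ = (1 + ‖ζ‖ ^ 2)⁻¹ * (2 * ζ.im))
    (hc₂ : c₂ = (1 + ‖ζ‖ ^ 2)⁻¹ * (-2 * ζ.re))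
    (hc₃ : c₃ = (1 + ‖ζ‖ ^ 2)⁻¹ * (1 - ‖ζ‖ ^ 2))
    (J : Module.End ℂ W)
    (hJ : J = (c₁ : ℂ) • J₁ + (c₂ : ℂ) • J₂ + (c₃ : ℂ) • J₃)
    (v : W) (hv : J₃ v = -(Complex.I • v)) :
    J (v + ζ • J₁ v) = -(Complex.I • (v + ζ • J₁ v)) := by
  rw [← neg_smul] at hv
  subst hJ
  simp only [LinearMap.add_apply, LinearMap.smul_apply, map_add, map_smul, hv,
    apply_apply_eq_neg_of_mul_self_eq_neg_one h1, apply_eq_neg_smul_of_mul_eq_neg h13 hv,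
    apply_apply_eq_neg_smul_of_mul_eq h31 h13 hv, apply_apply_eq_neg_smul_of_mul_eq_neg h21 hv]
  match_scalars
  · linear_combination stereo_coeff_of_J₁v hc₁ hc₂ hc₃
  · linear_combination stereo_coeff_of_v hc₁ hc₂ hc₃

/-- `(1 + ζJ₁)` maps the `(-i)`-eigenspace of `J₃` into the `(-i)`-eigenspace of
`J(ζ) = c₁(ζ)J₁ + c₂(ζ)J₂ + c₃(ζ)J₃`. -/
theorem stmt_4 (W : Type*) [AddCommGroup W] [Module ℂ W]
    (J₁ J₂ J₃ : Module.End ℂ W)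
    (h1 : J₁ * J₁ = -1) (h2 : J₂ * J₂ = -1) (h3 : J₃ * J₃ = -1)
    (h12 : J₁ * J₂ = J₃) (h21 : J₂ * J₁ = -J₃)
    (h23 : J₂ * J₃ = J₁) (h32 : J₃ * J₂ = -J₁)
    (h31 : J₃ * J₁ = J₂) (h13 : J₁ * J₃ = -J₂)
    (ζ : ℂ) (c₁ c₂ c₃ : ℝ)
    (hc₁ : c₁ = (1 + ‖ζ‖ ^ 2)⁻¹ * (2 * ζ.im))
    (hc₂ : c₂ = (1 + ‖ζ‖ ^ 2)⁻¹ * (-2 * ζ.re))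
    (hc₃ : c₃ = (1 + ‖ζ‖ ^ 2)⁻¹ * (1 - ‖ζ‖ ^ 2))
    (J : Module.End ℂ W)
    (hJ : J = (c₁ : ℂ) • J₁ + (c₂ : ℂ) • J₂ + (c₃ : ℂ) • J₃)
    (v : W) (hv : J₃ v = -(Complex.I • v)) :
    J (v + ζ • J₁ v) = -(Complex.I • (v + ζ • J₁ v)) :=
  stmt_4_general W J₁ J₂ J₃ h1 h21 h31 h13 ζ c₁ c₂ c₃ hc₁ hc₂ hc₃ J hJ v hv
end

section
/- Let J₁, J₂, J₃ satisfy the quaternion relations on a complex vector space W and let E = ker(J₃ + i·id) be the (−i)-eigenspace of J₃. Then for all v ∈ E and all ζ ∈ ℂ: (1 + ζJ₁)v = (1 − iζJ₂)v. Consequently, for ζ ≠ ±i the map (1+ζJ₁) restricted to E is injective with left inverse (1−ζJ₁)/(1+ζ²), and for ζ ≠ ±1 it is injective with left inverse (1+iζJ₂)/(1−ζ²); hence (1+ζJ₁)|_E is injective for every ζ ∈ ℂ. -/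
/-- On the `(-i)`-eigenspace `E` of `J₃` one has `(1+ζJ₁)v = (1-iζJ₂)v`; for
`ζ ≠ ±i` the map `(1+ζJ₁)|_E` has left inverse `(1-ζJ₁)/(1+ζ²)`, for `ζ ≠ ±1`
it has left inverse `(1+iζJ₂)/(1-ζ²)`; hence it is injective for every `ζ`. -/
theorem stmt_5 (W : Type*) [AddCommGroup W] [Module ℂ W]
    (J₁ J₂ J₃ : Module.End ℂ W)
    (h1 : J₁ * J₁ = -1) (h2 : J₂ * J₂ = -1) (h3 : J₃ * J₃ = -1)
    (h12 : J₁ * J₂ = J₃) (h21 : J₂ * J₁ = -J₃)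
    (h23 : J₂ * J₃ = J₁) (h32 : J₃ * J₂ = -J₁)
    (h31 : J₃ * J₁ = J₂) (h13 : J₁ * J₃ = -J₂)
    (E : Set W) (hE : E = {v : W | J₃ v = -(Complex.I • v)}) :
    (∀ v ∈ E, ∀ ζ : ℂ, v + ζ • J₁ v = v - (Complex.I * ζ) • J₂ v) ∧
    (∀ ζ : ℂ, ζ ≠ Complex.I → ζ ≠ -Complex.I → ∀ v ∈ E,
      (1 + ζ ^ 2)⁻¹ • ((v + ζ • J₁ v) - ζ • J₁ (v + ζ • J₁ v)) = v) ∧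
    (∀ ζ : ℂ, ζ ≠ 1 → ζ ≠ -1 → ∀ v ∈ E,
      (1 - ζ ^ 2)⁻¹ • ((v + ζ • J₁ v) + (Complex.I * ζ) • J₂ (v + ζ • J₁ v)) = v) ∧
    (∀ ζ : ℂ, ∀ v ∈ E, ∀ w ∈ E, v + ζ • J₁ v = w + ζ • J₁ w → v = w) := by
  subst hE
  have hI : Complex.I * Complex.I = -1 := Complex.I_mul_I
  -- J₂ v = I • J₁ v on E
  have key : ∀ v : W, J₃ v = -(Complex.I • v) → J₂ v = Complex.I • J₁ v := by
    intro v hv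
    have h := LinearMap.congr_fun h13 v
    rw [Module.End.mul_apply, LinearMap.neg_apply, hv, map_neg, map_smul] at h
    exact (neg_injective h).symm
  have key11 : ∀ v : W, J₁ (J₁ v) = -v := by
    intro v
    have h := LinearMap.congr_fun h1 v
    rw [Module.End.mul_apply] at h
    simpa using h
  have key21 : ∀ v : W, J₃ v = -(Complex.I • v) → J₂ (J₁ v) = Complex.I • v := by
    intro v hv
    have h := LinearMap.congr_fun h21 v
    rw [Module.End.mul_apply, LinearMap.neg_apply, hv] at h
    simpa using h
  have P1 : ∀ v ∈ {v : W | J₃ v = -(Complex.I • v)}, ∀ ζ : ℂ,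
      v + ζ • J₁ v = v - (Complex.I * ζ) • J₂ v := by
    intro v hv ζ
    rw [key v hv, smul_smul,
      show Complex.I * ζ * Complex.I = -ζ by linear_combination ζ * hI]
    module
  have P2 : ∀ ζ : ℂ, ζ ≠ Complex.I → ζ ≠ -Complex.I → ∀ v ∈ {v : W | J₃ v = -(Complex.I • v)},
      (1 + ζ ^ 2)⁻¹ • ((v + ζ • J₁ v) - ζ • J₁ (v + ζ • J₁ v)) = v := by
    intro ζ hi hni v hv
    have hne : (1 + ζ ^ 2) ≠ 0 := by
      intro h
      have h0 : (ζ - Complex.I) * (ζ + Complex.I) = 0 := by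
        linear_combination h - Complex.I_sq
      rcases mul_eq_zero.mp h0 with h' | h'
      · exact hi (sub_eq_zero.mp h')
      · exact hni (eq_neg_of_add_eq_zero_left h')
    rw [map_add, map_smul, key11 v,
      show (v + ζ • J₁ v) - ζ • (J₁ v + ζ • -v) = (1 + ζ ^ 2) • v by module,
      smul_smul, inv_mul_cancel₀ hne, one_smul]
  have P3 : ∀ ζ : ℂ, ζ ≠ 1 → ζ ≠ -1 → ∀ v ∈ {v : W | J₃ v = -(Complex.I • v)},
      (1 - ζ ^ 2)⁻¹ • ((v + ζ • J₁ v) + (Complex.I * ζ) • J₂ (v + ζ • J₁ v)) = v := by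
    intro ζ h1' hn1 v hv
    have hne : (1 - ζ ^ 2) ≠ 0 := by
      intro h
      have h0 : (1 - ζ) * (1 + ζ) = 0 := by linear_combination h
      rcases mul_eq_zero.mp h0 with h' | h'
      · exact h1' (sub_eq_zero.mp h').symm
      · exact hn1 (eq_neg_of_add_eq_zero_right h')
    rw [map_add, map_smul, key v hv, key21 v hv]
    simp only [smul_add, smul_smul]
    rw [show Complex.I * ζ * Complex.I = -ζ by linear_combination ζ * hI,
      show Complex.I * ζ * (ζ * Complex.I) = -ζ ^ 2 by linear_combination ζ ^ 2 * hI]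
    match_scalars <;> field_simp <;> ring
  refine ⟨P1, P2, P3, ?_⟩
  intro ζ v hv w hw heq
  by_cases hi : ζ = Complex.I ∨ ζ = -Complex.I
  · have h1' : ζ ≠ 1 := by
      rcases hi with rfl | rfl <;> simp [Complex.ext_iff]
    have hn1 : ζ ≠ -1 := by
      rcases hi with rfl | rfl <;> simp [Complex.ext_iff]
    rw [← P3 ζ h1' hn1 v hv, ← P3 ζ h1' hn1 w hw, heq]
  · push_neg at hi
    rw [← P2 ζ hi.1 hi.2 v hv, ← P2 ζ hi.1 hi.2 w hw, heq]
end

section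
/- With hyper-Kähler-compatible linear data and ϖ(ζ) = −(i/2ζ)ω₊ + ω₃ − (i/2)ζω₋ for ζ ∈ ℂ×, one has ϖ(ζ)(v, w) = −(i/2ζ) ω₊((1 − ζJ₁)v, (1 − ζJ₁)w) for all vectors v, w in the complexification. -/
/-- `ϖ(ζ)(v,w) = -(i/2ζ) ω₊((1-ζJ₁)v, (1-ζJ₁)w)`, where the right-hand side is
expanded ℂ-bilinearly. -/
theorem stmt_7 (V : Type*) [AddCommGroup V] [Module ℝ V]
    (g : V →ₗ[ℝ] V →ₗ[ℝ] ℝ) (hsymm : ∀ v w, g v w = g w v)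
    (hnd : ∀ v, (∀ w, g v w = 0) → v = 0)
    (J₁ J₂ J₃ : Module.End ℝ V)
    (h1 : J₁ * J₁ = -1) (h2 : J₂ * J₂ = -1) (h3 : J₃ * J₃ = -1)
    (h12 : J₁ * J₂ = J₃) (h21 : J₂ * J₁ = -J₃)
    (h23 : J₂ * J₃ = J₁) (h32 : J₃ * J₂ = -J₁)
    (h31 : J₃ * J₁ = J₂) (h13 : J₁ * J₃ = -J₂)
    (hg1 : ∀ v w, g (J₁ v) (J₁ w) = g v w)
    (hg2 : ∀ v w, g (J₂ v) (J₂ w) = g v w)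
    (hg3 : ∀ v w, g (J₃ v) (J₃ w) = g v w)
    (ωp ωm : V → V → ℂ)
    (hωp : ∀ v w, ωp v w = (g (J₁ v) w : ℂ) + Complex.I * (g (J₂ v) w : ℂ))
    (hωm : ∀ v w, ωm v w = (g (J₁ v) w : ℂ) - Complex.I * (g (J₂ v) w : ℂ))
    (ζ : ℂ) (hζ : ζ ≠ 0) :
    ∀ v w : V,
      -(Complex.I / (2 * ζ)) * ωp v w + (g (J₃ v) w : ℂ)
          - (Complex.I / 2) * ζ * ωm v w
        = -(Complex.I / (2 * ζ)) *
            (ωp v w - ζ * (ωp (J₁ v) w + ωp v (J₁ w))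
              + ζ ^ 2 * ωp (J₁ v) (J₁ w)) := by
  intro v w
  have e11 : J₁ (J₁ v) = -v := by
    have := congrArg (fun f : Module.End ℝ V => f v) h1
    simpa using this
  have e21 : J₂ (J₁ v) = -(J₃ v) := by
    have := congrArg (fun f : Module.End ℝ V => f v) h21
    simpa using this
  -- g (J₁ v) (J₁ w) = g v w  (hg1)
  -- g (J₂ v) (J₁ w) = - g (J₃ v) w
  have k2 : g (J₂ v) (J₁ w) = - g (J₃ v) w := by
    have := hg1 (J₂ v) (J₁ w)  -- g (J₁ J₂ v) (J₁ J₁ w) = g (J₂ v) (J₁ w)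
    have e12 : J₁ (J₂ v) = J₃ v := by
      have := congrArg (fun f : Module.End ℝ V => f v) h12
      simpa using this
    have e1w : J₁ (J₁ w) = -w := by
      have := congrArg (fun f : Module.End ℝ V => f w) h1
      simpa using this
    rw [e12, e1w] at this
    simp only [map_neg, LinearMap.neg_apply] at this
    linarith
  have k3 : g v (J₁ w) = - g (J₁ v) w := by
    have := hg1 v (J₁ w)
    have e1w : J₁ (J₁ w) = -w := by
      have := congrArg (fun f : Module.End ℝ V => f w) h1
      simpa using this
    rw [e1w] at this
    simp only [map_neg] at this
    linarith
  have k4 : g (J₃ v) (J₁ w) = g (J₂ v) w := by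
    have := hg1 (J₃ v) (J₁ w)
    have e13 : J₁ (J₃ v) = -(J₂ v) := by
      have := congrArg (fun f : Module.End ℝ V => f v) h13
      simpa using this
    have e1w : J₁ (J₁ w) = -w := by
      have := congrArg (fun f : Module.End ℝ V => f w) h1
      simpa using this
    rw [e13, e1w] at this
    simp only [map_neg, LinearMap.neg_apply] at this
    linarith
  rw [hωp v w, hωm v w, hωp (J₁ v) w, hωp v (J₁ w), hωp (J₁ v) (J₁ w),
    e11, e21]
  simp only [map_neg, LinearMap.neg_apply]
  rw [k2, k3, k4, hg1 v w]
  push_cast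
  field_simp
  ring_nf
  simp only [Complex.I_sq]
  ring
end

section
/- Theorem (κ equals J₁, linear algebra version): Let V be a real vector space with a ℝ³-parametrized family J(ζ) of complex structures (ζ ∈ ℂ ∪ {∞}) such that J(−1/ζ̄) = −J(ζ), and suppose κ : V ⊗ ℂ → V ⊗ ℂ is a real endomorphism exchanging the (1,0)- and (0,1)-spaces of J(0) such that the (0,1)-space of J(ζ) equals (1 + ζκ)·((0,1)-space of J(0)) for all ζ ∈ ℂ. Define J₁ = J(i), J₂ = J(−1), J₃ = J(0). Then κ = J₁ on all of V ⊗ ℂ, and (J₁, J₂, J₃) satisfy the quaternion relations J₁J₃ = −J₃J₁, J₃J₁ = J₂, J_α² = −id. -/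
/-- κ equals J₁ (linear algebra version): given a family of complex structures
`J(ζ)` with `J(-1/ζ̄) = -J(ζ)` and a real endomorphism `κ` exchanging the
(1,0)- and (0,1)-spaces of `J(0)` whose graph scaling describes the
(0,1)-spaces of all `J(ζ)`, one has `κ = J₁ := J(i)`, and with `J₂ := J(-1)`,
`J₃ := J(0)` the quaternion relations `J₁J₃ = -J₃J₁`, `J₃J₁ = J₂`,
`J_α² = -1` hold. -/
theorem stmt_14 (W : Type*) [AddCommGroup W] [Module ℂ W]
    (conjW : W → W)
    (hconj_add : ∀ v w, conjW (v + w) = conjW v + conjW w)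
    (hconj_smul : ∀ (c : ℂ) (v : W), conjW (c • v) = (starRingEnd ℂ c) • conjW v)
    (hconj_invol : ∀ v, conjW (conjW v) = v)
    (J : ℂ → Module.End ℂ W) (Jinf : Module.End ℂ W)
    -- each J(ζ) is a real operator squaring to -1
    (hJreal : ∀ ζ : ℂ, ∀ v, (J ζ) (conjW v) = conjW ((J ζ) v))
    (hJsq : ∀ ζ : ℂ, J ζ * J ζ = -1)
    -- antipodal compatibility
    (hanti : ∀ ζ : ℂ, ζ ≠ 0 → J (-1 / starRingEnd ℂ ζ) = -(J ζ))
    (hinf : Jinf = -(J 0))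
    (κ : Module.End ℂ W)
    (hκreal : ∀ v, κ (conjW v) = conjW (κ v))
    -- κ exchanges the (1,0)- and (0,1)-spaces of J(0)
    (hκ10 : ∀ v, (J 0) v = Complex.I • v → (J 0) (κ v) = -(Complex.I • κ v))
    (hκ01 : ∀ v, (J 0) v = -(Complex.I • v) → (J 0) (κ v) = Complex.I • κ v)
    -- the (0,1)-space of J(ζ) is (1 + ζκ) applied to the (0,1)-space of J(0)
    (hgraph : ∀ ζ : ℂ, ∀ v : W,
      ((J ζ) v = -(Complex.I • v) ↔
        ∃ u : W, (J 0) u = -(Complex.I • u) ∧ v = u + ζ • κ u)) :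
    κ = J Complex.I ∧
    (J Complex.I) * (J 0) = -((J 0) * (J Complex.I)) ∧
    (J 0) * (J Complex.I) = J (-1) ∧
    (J Complex.I) * (J Complex.I) = -1 ∧
    (J (-1)) * (J (-1)) = -1 ∧ (J 0) * (J 0) = -1 := by
  have hsq : ∀ ζ : ℂ, ∀ v, J ζ (J ζ v) = -v := by
    intro ζ v
    have h := DFunLike.congr_fun (hJsq ζ) v
    simpa [Module.End.mul_apply] using h
  have hconjI : ∀ x, conjW (Complex.I • x) = -(Complex.I • conjW x) := by
    intro x; rw [hconj_smul, Complex.conj_I, neg_smul]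
  have hconj_neg : ∀ x, conjW (-x) = -conjW x := by
    intro x
    have h := hconj_smul (-1) x
    simpa using h
  have h10c : ∀ v, J 0 v = Complex.I • v → J 0 (conjW v) = -(Complex.I • conjW v) := by
    intro v h
    rw [hJreal, h, hconjI]
  have h01c : ∀ v, J 0 v = -(Complex.I • v) → J 0 (conjW v) = Complex.I • conjW v := by
    intro v h
    rw [hJreal, h, hconj_neg, hconjI, neg_neg]
  have huniq : ∀ x, J 0 x = Complex.I • x → J 0 x = -(Complex.I • x) → x = 0 := by
    intro x h1 h2
    have he : Complex.I • x = -(Complex.I • x) := h1.symm.trans h2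
    have h4 : Complex.I • x + Complex.I • x = 0 := by
      linear_combination (norm := module) he
    have h3 : ((2 : ℂ) * Complex.I) • x = 0 := by
      rw [mul_smul, two_smul]; exact h4
    have h5 : x = ((2 : ℂ) * Complex.I)⁻¹ • (((2 : ℂ) * Complex.I) • x) := by
      rw [smul_smul, inv_mul_cancel₀ (by simp), one_smul]
    rw [h5, h3, smul_zero]
  have hsm10 : ∀ (c : ℂ) x, J 0 x = Complex.I • x → J 0 (c • x) = Complex.I • (c • x) := by
    intro c x h; rw [map_smul, h, smul_comm]
  have hsm01 : ∀ (c : ℂ) x, J 0 x = -(Complex.I • x) → J 0 (c • x) = -(Complex.I • (c • x)) := by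
    intro c x h; rw [map_smul, h, smul_neg, smul_comm]
  have hantiI : J (-Complex.I) = -(J Complex.I) := by
    have h := hanti (-Complex.I) (by simp)
    have harg : (-1 : ℂ) / starRingEnd ℂ (-Complex.I) = Complex.I := by
      simp [Complex.inv_I, div_eq_mul_inv]
    rw [harg] at h
    rw [h, neg_neg]
  -- κ² = -1 on the (1,0)-space
  have hκκ10 : ∀ w, J 0 w = Complex.I • w → κ (κ w) = -w := by
    intro w hw
    have hu : J 0 (conjW w) = -(Complex.I • conjW w) := h10c w hw
    have h1 : J Complex.I (conjW w + Complex.I • κ (conjW w)) =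
        -(Complex.I • (conjW w + Complex.I • κ (conjW w))) :=
      (hgraph Complex.I _).mpr ⟨conjW w, hu, rfl⟩
    have h2 : J (-Complex.I) (conjW w + Complex.I • κ (conjW w)) =
        Complex.I • (conjW w + Complex.I • κ (conjW w)) := by
      rw [hantiI, LinearMap.neg_apply, h1, neg_neg]
    have h3 : J (-Complex.I) (conjW (conjW w + Complex.I • κ (conjW w))) =
        -(Complex.I • conjW (conjW w + Complex.I • κ (conjW w))) := by
      rw [hJreal, h2, hconjI]
    have hy : conjW (conjW w + Complex.I • κ (conjW w)) = w + -(Complex.I • κ w) := by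
      rw [hconj_add, hconj_invol, hconjI, hκreal, hconj_invol]
    rw [hy] at h3
    obtain ⟨u', hu', hyu'⟩ := (hgraph (-Complex.I) _).mp h3
    have hκu' : J 0 (κ u') = Complex.I • κ u' := hκ01 u' hu'
    have hκw : J 0 (κ w) = -(Complex.I • κ w) := hκ10 w hw
    have hab : w - (-Complex.I) • κ u' = -((-Complex.I) • κ w - u') := by
      linear_combination (norm := module) hyu'
    have haA : J 0 (w - (-Complex.I) • κ u') = Complex.I • (w - (-Complex.I) • κ u') := by
      rw [map_sub, hw, hsm10 _ _ hκu', smul_sub]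
    have haB : J 0 (w - (-Complex.I) • κ u') = -(Complex.I • (w - (-Complex.I) • κ u')) := by
      rw [hab, map_neg, map_sub, hsm01 _ _ hκw, hu']
      module
    have ha0 : w - (-Complex.I) • κ u' = 0 := huniq _ haA haB
    have hb0 : (-Complex.I) • κ w - u' = 0 := by
      have h6 := hab.symm
      rw [ha0] at h6
      exact neg_eq_zero.mp h6
    have hw_eq : w = (-Complex.I) • κ u' := sub_eq_zero.mp ha0
    have hu'_eq : u' = (-Complex.I) • κ w := (sub_eq_zero.mp hb0).symm
    rw [hu'_eq, map_smul, smul_smul, neg_mul_neg, Complex.I_mul_I, neg_one_smul] at hw_eq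
    exact neg_eq_iff_eq_neg.mp hw_eq.symm
  have hκκ01 : ∀ u, J 0 u = -(Complex.I • u) → κ (κ u) = -u := by
    intro u hu
    have h1 : J 0 (conjW u) = Complex.I • conjW u := h01c u hu
    have h2 := hκκ10 (conjW u) h1
    have h3 : κ (κ u) = conjW (κ (κ (conjW u))) := by
      rw [hκreal, hκreal, hconj_invol]
    rw [h3, h2, hconj_neg, hconj_invol]
  -- J(i) = κ on the (0,1)-space
  have hJiκ01 : ∀ u, J 0 u = -(Complex.I • u) → J Complex.I u = κ u := by
    intro u hu
    have ha : J Complex.I (u + Complex.I • κ u) = -(Complex.I • (u + Complex.I • κ u)) :=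
      (hgraph Complex.I _).mpr ⟨u, hu, rfl⟩
    have hub : J 0 (conjW u) = Complex.I • conjW u := h01c u hu
    have hκub : J 0 (κ (conjW u)) = -(Complex.I • κ (conjW u)) := hκ10 _ hub
    have hu2 : J 0 (Complex.I • κ (conjW u)) = -(Complex.I • (Complex.I • κ (conjW u))) :=
      hsm01 _ _ hκub
    have hx0 : conjW u + Complex.I • κ (conjW u) =
        (Complex.I • κ (conjW u)) + Complex.I • κ (Complex.I • κ (conjW u)) := by
      rw [map_smul, hκκ10 _ hub]
      match_scalars <;> norm_num [Complex.ext_iff]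
    have hx : J Complex.I (conjW u + Complex.I • κ (conjW u)) =
        -(Complex.I • (conjW u + Complex.I • κ (conjW u))) := by
      rw [hx0]; exact (hgraph Complex.I _).mpr ⟨_, hu2, rfl⟩
    have hc : conjW (conjW u + Complex.I • κ (conjW u)) = u + -(Complex.I • κ u) := by
      rw [hconj_add, hconj_invol, hconjI, hκreal, hconj_invol]
    have hb : J Complex.I (u + -(Complex.I • κ u)) = Complex.I • (u + -(Complex.I • κ u)) := by
      rw [← hc, hJreal, hx, hconj_neg, hconjI, neg_neg]
    have hsum : J Complex.I ((2 : ℂ) • u) = (2 : ℂ) • κ u := by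
      have h7 : (2 : ℂ) • u = (u + Complex.I • κ u) + (u + -(Complex.I • κ u)) := by module
      rw [h7, map_add, ha, hb]
      match_scalars <;> norm_num [Complex.ext_iff]
    rw [map_smul] at hsum
    have h10 : ∀ x : W, (2 : ℂ)⁻¹ • ((2 : ℂ) • x) = x := by
      intro x
      rw [smul_smul, show ((2 : ℂ)⁻¹ * 2) = 1 by norm_num, one_smul]
    calc J Complex.I u = (2 : ℂ)⁻¹ • ((2 : ℂ) • J Complex.I u) := (h10 _).symm
      _ = (2 : ℂ)⁻¹ • ((2 : ℂ) • κ u) := by rw [hsum]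
      _ = κ u := h10 _
  have hJiκ10 : ∀ w, J 0 w = Complex.I • w → J Complex.I w = κ w := by
    intro w hw
    have h1 : J Complex.I w = conjW (J Complex.I (conjW w)) := by
      rw [← hJreal, hconj_invol]
    rw [h1, hJiκ01 (conjW w) (h10c w hw), ← hκreal, hconj_invol]
  -- eigen decomposition
  have hdecomp : ∀ v : W, ∃ p q : W, J 0 p = Complex.I • p ∧ J 0 q = -(Complex.I • q) ∧
      v = p + q := by
    intro v
    refine ⟨(2⁻¹ : ℂ) • (v - Complex.I • J 0 v), (2⁻¹ : ℂ) • (v + Complex.I • J 0 v), ?_, ?_, ?_⟩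
    · rw [map_smul, map_sub, map_smul, hsq 0 v]
      match_scalars <;> norm_num [Complex.ext_iff]
    · rw [map_smul, map_add, map_smul, hsq 0 v]
      match_scalars <;> norm_num [Complex.ext_iff]
    · module
  have keyv : ∀ v, J Complex.I v = κ v := by
    intro v
    obtain ⟨p, q, hp, hq, hv⟩ := hdecomp v
    rw [hv, map_add, map_add, hJiκ10 p hp, hJiκ01 q hq]
  have hκeq : κ = J Complex.I := by
    ext v; exact (keyv v).symm
  have hanticomm : ∀ v, κ (J 0 v) = -(J 0 (κ v)) := by
    intro v
    obtain ⟨p, q, hp, hq, hv⟩ := hdecomp v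
    have e1 : κ (J 0 v) = Complex.I • κ p - Complex.I • κ q := by
      rw [hv, map_add (J 0), hp, hq,
        show Complex.I • p + -(Complex.I • q) = Complex.I • p - Complex.I • q from by module,
        map_sub, map_smul, map_smul]
    have e2 : J 0 (κ v) = -(Complex.I • κ p) + Complex.I • κ q := by
      rw [hv, map_add κ, map_add (J 0), hκ10 p hp, hκ01 q hq]
    rw [e1, e2]; module
  refine ⟨hκeq, ?_, ?_, hJsq Complex.I, hJsq (-1), hJsq 0⟩
  · ext v
    simp only [Module.End.mul_apply, LinearMap.neg_apply]
    rw [keyv, keyv]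
    exact hanticomm v
  · ext v
    simp only [Module.End.mul_apply]
    rw [keyv]
    obtain ⟨p, q, hp, hq, hv⟩ := hdecomp v
    have hκκp : κ (κ p) = -p := hκκ10 p hp
    have hκκq : κ (κ q) = -q := hκκ01 q hq
    have hκp : J 0 (κ p) = -(Complex.I • κ p) := hκ10 p hp
    have hκq : J 0 (κ q) = Complex.I • κ q := hκ01 q hq
    obtain ⟨w', hw'_def⟩ : ∃ w', w' = (2⁻¹ : ℂ) • (p + κ q) := ⟨_, rfl⟩
    obtain ⟨u', hu'_def⟩ : ∃ u', u' = (2⁻¹ : ℂ) • (q + κ p) := ⟨_, rfl⟩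
    have hw' : J 0 w' = Complex.I • w' := by
      rw [hw'_def, map_smul, map_add, hp, hκq]
      module
    have hu' : J 0 u' = -(Complex.I • u') := by
      rw [hu'_def, map_smul, map_add, hq, hκp]
      module
    have hJm1u : J (-1) (u' + (-1 : ℂ) • κ u') = -(Complex.I • (u' + (-1 : ℂ) • κ u')) :=
      (hgraph (-1) _).mpr ⟨u', hu', rfl⟩
    have hu3 : J 0 (conjW w') = -(Complex.I • conjW w') := h10c w' hw'
    have hJm1z : J (-1) (conjW w' + (-1 : ℂ) • κ (conjW w')) =
        -(Complex.I • (conjW w' + (-1 : ℂ) • κ (conjW w'))) :=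
      (hgraph (-1) _).mpr ⟨conjW w', hu3, rfl⟩
    have hc : conjW (conjW w' + (-1 : ℂ) • κ (conjW w')) = w' + (-1 : ℂ) • κ w' := by
      rw [hconj_add, hconj_invol, hconj_smul, hκreal, hconj_invol]
      norm_num
    have hJm1w : J (-1) (w' + (-1 : ℂ) • κ w') = Complex.I • (w' + (-1 : ℂ) • κ w') := by
      rw [← hc, hJreal, hJm1z, hconj_neg, hconjI, neg_neg]
    have hκw' : κ w' = (2⁻¹ : ℂ) • (κ p + -q) := by
      rw [hw'_def, map_smul, map_add, hκκq]
    have hκu' : κ u' = (2⁻¹ : ℂ) • (κ q + -p) := by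
      rw [hu'_def, map_smul, map_add, hκκp]
    have hv2 : v = (w' + (-1 : ℂ) • κ w') + (u' + (-1 : ℂ) • κ u') := by
      rw [hκw', hκu', hw'_def, hu'_def, hv]
      module
    have L : J 0 (κ v) = -(Complex.I • κ p) + Complex.I • κ q := by
      rw [hv, map_add κ, map_add (J 0), hκp, hκq]
    have R : J (-1) v = -(Complex.I • κ p) + Complex.I • κ q := by
      calc J (-1) v = J (-1) ((w' + (-1 : ℂ) • κ w') + (u' + (-1 : ℂ) • κ u')) := by
            rw [← hv2]
        _ = Complex.I • (w' + (-1 : ℂ) • κ w') + -(Complex.I • (u' + (-1 : ℂ) • κ u')) := by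
            rw [map_add, hJm1u, hJm1w]
        _ = -(Complex.I • κ p) + Complex.I • κ q := by
            rw [hκw', hκu', hw'_def, hu'_def]
            module
    rw [L, R]
end

section
/- Real holomorphic sections classification (linear version): Let J₁ be a complex structure on a real vector space V, extended to V ⊗ ℂ, and let W^{1,0} be the (1,0)-space of another complex structure J₃ anticommuting with J₁. A degree-1 polynomial section v(ζ) = a + ζb with a, b ∈ W^{1,0} satisfies the reality condition v(ζ) = −ζ J₁ conj(v(−1/ζ̄)) for all ζ ∈ ℂ× if and only if b = −J₁ā. Moreover, if a ≠ 0, then v(ζ) = a − ζJ₁ā is nonzero for every ζ ∈ ℂ. -/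
/-- Real holomorphic sections, linear version: a degree-1 section
`v(ζ) = a + ζ b` with `a, b` in the (1,0)-space of `J₃` satisfies the reality
condition `v(ζ) = -ζ J₁ conj(v(-1/ζ̄))` for all `ζ ≠ 0` iff `b = -J₁ ā`;
moreover if `a ≠ 0` then `a - ζ J₁ ā ≠ 0` for every `ζ`. -/
theorem stmt_16 (W : Type*) [AddCommGroup W] [Module ℂ W]
    (conjW : W → W)
    (hconj_add : ∀ v w, conjW (v + w) = conjW v + conjW w)
    (hconj_smul : ∀ (c : ℂ) (v : W), conjW (c • v) = (starRingEnd ℂ c) • conjW v)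
    (hconj_invol : ∀ v, conjW (conjW v) = v)
    (J₁ J₃ : Module.End ℂ W)
    (h1real : ∀ v, J₁ (conjW v) = conjW (J₁ v))
    (h3real : ∀ v, J₃ (conjW v) = conjW (J₃ v))
    (h1 : J₁ * J₁ = -1) (h3 : J₃ * J₃ = -1)
    (hanti : J₁ * J₃ = -(J₃ * J₁))
    (a b : W)
    (ha : J₃ a = Complex.I • a) (hb : J₃ b = Complex.I • b) :
    ((∀ ζ : ℂ, ζ ≠ 0 →
        a + ζ • b =
          -(ζ • J₁ (conjW (a + (-1 / starRingEnd ℂ ζ) • b)))) ↔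
      b = -(J₁ (conjW a))) ∧
    (a ≠ 0 → ∀ ζ : ℂ, a - ζ • J₁ (conjW a) ≠ 0) := by
  have hJJ : ∀ v : W, J₁ (J₁ v) = -v := by
    intro v
    have := LinearMap.ext_iff.mp h1 v
    simpa [Module.End.mul_apply] using this
  have hconj_neg : ∀ v : W, conjW (-v) = -(conjW v) := by
    intro v
    have := hconj_smul (-1) v
    simpa using this
  constructor
  · constructor
    · intro hcond
      have e1 := hcond 1 one_ne_zero
      have e2 := hcond (-1) (by norm_num)
      have e1' : a + b = -(J₁ (conjW a)) + J₁ (conjW b) := by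
        have h1s : (-1 : ℂ) / (starRingEnd ℂ 1) = -1 := by norm_num
        rw [h1s] at e1
        rw [hconj_add, hconj_smul, map_add, map_smul] at e1
        simp only [one_smul, map_neg, map_one, neg_one_smul] at e1
        rw [e1]; abel
      have e2' : a - b = J₁ (conjW a) + J₁ (conjW b) := by
        have h2s : (-1 : ℂ) / (starRingEnd ℂ (-1)) = 1 := by norm_num
        rw [h2s] at e2
        rw [hconj_add, hconj_smul, map_add, map_smul] at e2
        simp only [one_smul, map_one, neg_one_smul, neg_smul, neg_neg] at e2
        rw [sub_eq_add_neg]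
        rw [e2]
      have key : (2 : ℂ) • b = (2 : ℂ) • (-(J₁ (conjW a))) := by
        have hsub : (a + b) - (a - b)
            = (-(J₁ (conjW a)) + J₁ (conjW b)) - (J₁ (conjW a) + J₁ (conjW b)) := by
          rw [e1', e2']
        have hl : (a + b) - (a - b) = (2 : ℂ) • b := by rw [two_smul]; abel
        have hr : (-(J₁ (conjW a)) + J₁ (conjW b)) - (J₁ (conjW a) + J₁ (conjW b))
            = (2 : ℂ) • (-(J₁ (conjW a))) := by rw [two_smul]; abel
        rw [hl, hr] at hsub
        exact hsub
      exact smul_right_injective W (by norm_num : (2:ℂ) ≠ 0) key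
    · intro hbeq ζ hζ
      subst hbeq
      have hs : (starRingEnd ℂ) (-1 / (starRingEnd ℂ) ζ) = -1 / ζ := by
        simp [map_div₀]
      rw [hconj_add, hconj_smul, hs, hconj_neg, h1real, hconj_invol]
      rw [map_add, map_smul, map_neg, hJJ, neg_neg]
      rw [smul_add, smul_smul]
      have hc : ζ * (-1 / ζ) = -1 := by field_simp
      rw [hc, neg_one_smul, smul_neg]
      simp only [h1real]
      abel
  · intro hane ζ hzero
    have heq : a = ζ • J₁ (conjW a) := sub_eq_zero.mp hzero
    have hca : conjW a = (starRingEnd ℂ ζ) • J₁ a := by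
      conv_lhs => rw [heq]
      rw [hconj_smul, ← h1real, hconj_invol]
    have hJca : J₁ (conjW a) = -((starRingEnd ℂ ζ) • a) := by
      rw [hca, map_smul, hJJ, smul_neg]
    have hfin : a = -((ζ * starRingEnd ℂ ζ) • a) := by
      conv_lhs => rw [heq]
      rw [hJca, smul_neg, smul_smul]
    have hzero' : ((1 : ℂ) + ζ * starRingEnd ℂ ζ) • a = 0 := by
      rw [add_smul, one_smul]
      nth_rewrite 1 [hfin]
      abel
    have hne : (1 : ℂ) + ζ * starRingEnd ℂ ζ ≠ 0 := by
      rw [Complex.mul_conj]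
      intro h
      have := congrArg Complex.re h
      simp at this
      nlinarith [Complex.normSq_nonneg ζ, this]
    exact hane ((smul_eq_zero.mp hzero').resolve_left hne)
end
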